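/- arXiv:2209.00694 — 6 statements merged into one kernel-verified Lean document; each statement's English description precedes it below -/
import Mathlib

section
/- Let K be a field with char K ≠ 2, I and Ĩ finite sets with formats k : I → ℤ/2 and l : Ĩ → ℤ/2, and let B be an even idempotent for the format k and B̃ an even idempotent for the format l; set S̃ = 1 − B̃. Let 𝒜 be a ℤ₂-graded K-algebra containing elements x̃ᵃ (a ∈ Ĩ) homogeneous of degree l(a) satisfying, for all c,d ∈ Ĩ, ∑_{a,b∈Ĩ} (−1)^{l(a)·l(b)} B̃((c,d),(a,b)) · x̃ᵃ · x̃ᵇ = 0, and elements Mⁱₐ (i ∈ I, a ∈ Ĩ) homogeneous of degree k(i)+l(a) which super-commute with the x̃'s: Mⁱₐ · x̃ᵇ = (−1)^{(k(i)+l(a))·l(b)} x̃ᵇ · Mⁱₐ for all i,a,b. If M satisfies the (B,B̃)-Manin matrix condition: for all s,t ∈ I and c,d ∈ Ĩ, ∑_{i,j∈I} ∑_{a,b∈Ĩ} (−1)^{(k(i)+l(a))·k(j)} B((s,t),(i,j)) · Mⁱₐ · Mʲ_b · S̃((a,b),(c,d)) = 0, then the elements yⁱ := ∑_{a∈Ĩ}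 Mⁱₐ · x̃ᵃ satisfy, for all s,t ∈ I, ∑_{i,j∈I} (−1)^{k(i)·k(j)} B((s,t),(i,j)) · yⁱ · yʲ = 0. -/
private lemma zmod2_sign_key {K : Type*} [Field K] (u v w z : ZMod 2) :
    (-1:K)^(u*v).val * (-1:K)^((v+z)*w).val
      = (-1:K)^(w*z).val * (-1:K)^((u+w)*v).val := by
  have h : ∀ x : ZMod 2, x = 0 ∨ x = 1 := by decide
  rcases h u with rfl|rfl <;> rcases h v with rfl|rfl <;>
    rcases h w with rfl|rfl <;> rcases h z with rfl|rfl <;>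
    norm_num [show ((2:ZMod 2)).val = 0 from rfl,
      show ((1:ZMod 2)).val = 1 from rfl, show ((0:ZMod 2)).val = 0 from rfl]

private lemma sum4_comm {M : Type*} [AddCommMonoid M] {I I' J J' : Type*}
    [Fintype I] [Fintype I'] [Fintype J] [Fintype J']
    (f : I → I' → J → J' → M) :
    ∑ i, ∑ j, ∑ a, ∑ b, f i j a b = ∑ a, ∑ b, ∑ i, ∑ j, f i j a b := by
  calc ∑ i, ∑ j, ∑ a, ∑ b, f i j a b
      = ∑ i, ∑ a, ∑ j, ∑ b, f i j a b :=
        Finset.sum_congr rfl fun i _ => Finset.sum_comm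
    _ = ∑ a, ∑ i, ∑ j, ∑ b, f i j a b := Finset.sum_comm
    _ = ∑ a, ∑ i, ∑ b, ∑ j, f i j a b :=
        Finset.sum_congr rfl fun a _ => Finset.sum_congr rfl fun i _ =>
          Finset.sum_comm
    _ = ∑ a, ∑ b, ∑ i, ∑ j, f i j a b :=
        Finset.sum_congr rfl fun a _ => Finset.sum_comm


/-- A `(B, Bt)`-Manin matrix `M` over a ℤ₂-graded algebra, whose entries
super-commute with the generators `xt` of `𝔛_{Bt}(𝒜)`, transforms `xt` into elements
`y i = ∑ a, M i a * xt a` satisfying the defining relations of `𝔛_B`.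
Here `I`, `J` are finite index sets with formats `k : I → ℤ/2`, `l : J → ℤ/2`,
`B` and `Bt` are even idempotents for these formats, and `St = 1 - Bt`. -/
theorem manin_matrix_transforms_relations
    {K : Type*} [Field K] (hchar : (2 : K) ≠ 0)
    {I J : Type*} [Fintype I] [Fintype J] [DecidableEq I] [DecidableEq J]
    (k : I → ZMod 2) (l : J → ZMod 2)
    (B : Matrix (I × I) (I × I) K) (Bt : Matrix (J × J) (J × J) K)
    (hBidem : B * B = B)
    (hBeven : ∀ s t i j, k s + k t ≠ k i + k j → B (s, t) (i, j) = 0)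
    (hBtidem : Bt * Bt = Bt)
    (hBteven : ∀ c d a b, l c + l d ≠ l a + l b → Bt (c, d) (a, b) = 0)
    {A : Type*} [Ring A] [Algebra K A]
    (𝒜 : ZMod 2 → Submodule K A)
    (hinternal : DirectSum.IsInternal 𝒜)
    (hone : (1 : A) ∈ 𝒜 0)
    (hmul : ∀ (g h : ZMod 2) (x y : A), x ∈ 𝒜 g → y ∈ 𝒜 h → x * y ∈ 𝒜 (g + h))
    (xt : J → A)
    (hxthom : ∀ a, xt a ∈ 𝒜 (l a))
    (hxtrel : ∀ c d : J,
      ∑ a : J, ∑ b : J,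
        ((-1 : K) ^ (l a * l b).val * Bt (c, d) (a, b)) • (xt a * xt b) = 0)
    (M : I → J → A)
    (hMhom : ∀ i a, M i a ∈ 𝒜 (k i + l a))
    (hcomm : ∀ i a b,
      M i a * xt b = ((-1 : K) ^ ((k i + l a) * l b).val) • (xt b * M i a))
    (hManin : ∀ (s t : I) (c d : J),
      ∑ i : I, ∑ j : I, ∑ a : J, ∑ b : J,
        ((-1 : K) ^ ((k i + l a) * k j).val * B (s, t) (i, j)
          * ((1 : Matrix (J × J) (J × J) K) - Bt) (a, b) (c, d))
          • (M i a * M j b) = 0) :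
    ∀ s t : I,
      ∑ i : I, ∑ j : I,
        ((-1 : K) ^ (k i * k j).val * B (s, t) (i, j)) •
          ((∑ a : J, M i a * xt a) * (∑ b : J, M j b * xt b)) = 0 := by
  intro s t
  set St : Matrix (J × J) (J × J) K := (1 : Matrix (J × J) (J × J) K) - Bt
    with hStdef
  set C : J → J → A := fun a b => ∑ i : I, ∑ j : I,
      ((-1 : K) ^ ((k i + l a) * k j).val * B (s, t) (i, j)) • (M i a * M j b)
    with hCdef
  -- swap xt past M
  have hswap : ∀ (i j : I) (a b : J),
      (M i a * xt a) * (M j b * xt b)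
        = ((-1:K)^((k j + l b) * l a).val) • (M i a * (M j b * (xt a * xt b))) := by
    intro i j a b
    have h2 : xt a * M j b = ((-1:K)^((k j + l b) * l a).val) • (M j b * xt a) := by
      rw [hcomm j b a, smul_smul, ← pow_add, Even.neg_one_pow ⟨_, rfl⟩, one_smul]
    calc (M i a * xt a) * (M j b * xt b)
        = M i a * ((xt a * M j b) * xt b) := by noncomm_ring
      _ = M i a * ((((-1:K)^((k j + l b) * l a).val) • (M j b * xt a)) * xt b) := by
          rw [h2]
      _ = ((-1:K)^((k j + l b) * l a).val) • (M i a * (M j b * (xt a * xt b))) := by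
          rw [smul_mul_assoc, mul_smul_comm, mul_assoc]
  -- Step 1: rewrite the goal sum in terms of C
  have step1 : ∑ i : I, ∑ j : I, ((-1 : K) ^ (k i * k j).val * B (s, t) (i, j)) •
        ((∑ a : J, M i a * xt a) * (∑ b : J, M j b * xt b))
      = ∑ a : J, ∑ b : J, ((-1:K)^(l a * l b).val) • (C a b * (xt a * xt b)) := by
    have lhs_eq : ∑ i : I, ∑ j : I, ((-1 : K) ^ (k i * k j).val * B (s, t) (i, j)) •
          ((∑ a : J, M i a * xt a) * (∑ b : J, M j b * xt b))
        = ∑ i : I, ∑ j : I, ∑ a : J, ∑ b : J,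
          (((-1:K)^(k i * k j).val * B (s,t) (i,j)) * (-1:K)^((k j + l b) * l a).val)
            • (M i a * (M j b * (xt a * xt b))) := by
      refine Finset.sum_congr rfl fun i _ => Finset.sum_congr rfl fun j _ => ?_
      rw [Finset.sum_mul_sum, Finset.smul_sum]
      refine Finset.sum_congr rfl fun a _ => ?_
      rw [Finset.smul_sum]
      refine Finset.sum_congr rfl fun b _ => ?_
      rw [hswap i j a b, smul_smul]
    have rhs_eq : ∑ a : J, ∑ b : J, ((-1:K)^(l a * l b).val) • (C a b * (xt a * xt b))
        = ∑ a : J, ∑ b : J, ∑ i : I, ∑ j : I,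
          ((-1:K)^(l a * l b).val * ((-1:K)^((k i + l a) * k j).val * B (s,t) (i,j)))
            • (M i a * (M j b * (xt a * xt b))) := by
      refine Finset.sum_congr rfl fun a _ => Finset.sum_congr rfl fun b _ => ?_
      rw [hCdef]
      simp only []
      rw [Finset.sum_mul, Finset.smul_sum]
      refine Finset.sum_congr rfl fun i _ => ?_
      rw [Finset.sum_mul, Finset.smul_sum]
      refine Finset.sum_congr rfl fun j _ => ?_
      rw [smul_mul_assoc, smul_smul, mul_assoc]
    rw [lhs_eq, rhs_eq]
    rw [sum4_comm fun i j a b =>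
      (((-1:K)^(k i * k j).val * B (s,t) (i,j)) * (-1:K)^((k j + l b) * l a).val)
        • (M i a * (M j b * (xt a * xt b)))]
    refine Finset.sum_congr rfl fun a _ => Finset.sum_congr rfl fun b _ =>
      Finset.sum_congr rfl fun i _ => Finset.sum_congr rfl fun j _ => ?_
    congr 1
    have hk := zmod2_sign_key (K := K) (k i) (k j) (l a) (l b)
    rw [mul_right_comm, hk, mul_assoc]
  rw [step1]
  -- the Manin condition kills the S-part
  have hManin0 : ∀ a b : J, (∑ c : J, ∑ d : J, St (c, d) (a, b) • C c d) = 0 := by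
    intro a b
    have h := hManin s t a b
    calc ∑ c : J, ∑ d : J, St (c,d) (a,b) • C c d
        = ∑ c : J, ∑ d : J, ∑ i : I, ∑ j : I,
            ((-1:K)^((k i + l c) * k j).val * B (s,t) (i,j) * St (c,d) (a,b))
              • (M i c * M j d) := by
          refine Finset.sum_congr rfl fun c _ => Finset.sum_congr rfl fun d _ => ?_
          rw [hCdef]
          simp only []
          rw [Finset.smul_sum]
          refine Finset.sum_congr rfl fun i _ => ?_
          rw [Finset.smul_sum]
          refine Finset.sum_congr rfl fun j _ => ?_
          rw [smul_smul]
          congr 1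
          ring
      _ = ∑ i : I, ∑ j : I, ∑ c : J, ∑ d : J,
            ((-1:K)^((k i + l c) * k j).val * B (s,t) (i,j) * St (c,d) (a,b))
              • (M i c * M j d) :=
          (sum4_comm fun i j c d =>
            ((-1:K)^((k i + l c) * k j).val * B (s,t) (i,j) * St (c,d) (a,b))
              • (M i c * M j d)).symm
      _ = 0 := h
  -- delta decomposition of C
  have hdelta : ∀ a b : J, C a b = ∑ c : J, ∑ d : J, Bt (c,d) (a,b) • C c d := by
    intro a b
    have e1 : ∀ c d : J, Bt (c,d) (a,b) • C c d
        = ((1 : Matrix (J×J) (J×J) K) (c,d) (a,b)) • C c d - St (c,d) (a,b) • C c d := by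
      intro c d
      rw [← sub_smul]
      congr 1
      rw [hStdef]
      simp [Matrix.sub_apply]
    calc C a b
        = ∑ c : J, ∑ d : J, ((1 : Matrix (J×J) (J×J) K) (c,d) (a,b)) • C c d := by
          simp [Matrix.one_apply, Prod.ext_iff, ite_and, ite_smul]
      _ = (∑ c : J, ∑ d : J, ((1 : Matrix (J×J) (J×J) K) (c,d) (a,b)) • C c d)
            - ∑ c : J, ∑ d : J, St (c,d) (a,b) • C c d := by
          rw [hManin0 a b, sub_zero]
      _ = ∑ c : J, ∑ d : J, Bt (c,d) (a,b) • C c d := by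
          simp only [e1, Finset.sum_sub_distrib]
  -- now conclude using the xt relations
  calc ∑ a : J, ∑ b : J, ((-1:K)^(l a * l b).val) • (C a b * (xt a * xt b))
      = ∑ a : J, ∑ b : J, ∑ c : J, ∑ d : J,
          ((-1:K)^(l a * l b).val * Bt (c,d) (a,b)) • (C c d * (xt a * xt b)) := by
        refine Finset.sum_congr rfl fun a _ => Finset.sum_congr rfl fun b _ => ?_
        rw [hdelta a b, Finset.sum_mul, Finset.smul_sum]
        refine Finset.sum_congr rfl fun c _ => ?_
        rw [Finset.sum_mul, Finset.smul_sum]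
        refine Finset.sum_congr rfl fun d _ => ?_
        rw [smul_mul_assoc, smul_smul]
    _ = ∑ c : J, ∑ d : J, C c d *
          (∑ a : J, ∑ b : J, ((-1:K)^(l a * l b).val * Bt (c,d) (a,b)) • (xt a * xt b)) := by
        rw [sum4_comm fun a b c d =>
          ((-1:K)^(l a * l b).val * Bt (c,d) (a,b)) • (C c d * (xt a * xt b))]
        refine Finset.sum_congr rfl fun c _ => Finset.sum_congr rfl fun d _ => ?_
        rw [Finset.mul_sum]
        refine Finset.sum_congr rfl fun a _ => ?_
        rw [Finset.mul_sum]
        refine Finset.sum_congr rfl fun b _ => ?_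
        rw [mul_smul_comm]
    _ = 0 := by
        simp only [hxtrel, mul_zero, Finset.sum_const_zero]
end

section
/- Let K be a field with char K ≠ 2, I a finite set with format k : I → ℤ/2, B an even idempotent for the format k, and S = 1 − B. Let 𝒜 be a ℤ₂-graded K-algebra and let M, N be two I×I matrices with entries Mⁱⱼ, Nⁱⱼ ∈ 𝒜 homogeneous of degree k(i)+k(j), each satisfying the B-Manin matrix condition: for all s,t,c,d ∈ I, ∑_{i,j,a,b∈I} (−1)^{(k(i)+k(a))·k(j)} B((s,t),(i,j)) · Mⁱₐ · Mʲ_b · S((a,b),(c,d)) = 0, and likewise for N. Suppose moreover that every entry of M super-commutes with every entry of N: Mⁱⱼ · Nᵖ_q = (−1)^{(k(i)+k(j))·(k(p)+k(q))} Nᵖ_q · Mⁱⱼ for all i,j,p,q. Then the product matrix with entries (MN)ⁱⱼ := ∑_{l∈I} Mⁱ_l · Nˡⱼ also satisfies the B-Manin matrix condition. -/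
private lemma chi_add' {R : Type*} [Ring R] (x y : ZMod 2) :
    (-1 : R) ^ (x + y).val = (-1) ^ x.val * (-1) ^ y.val := by
  have hx : x = 0 ∨ x = 1 := by revert x; decide
  have hy : y = 0 ∨ y = 1 := by revert y; decide
  rcases hx with rfl | rfl <;> rcases hy with rfl | rfl <;>
    norm_num [show ((2 : ZMod 2)).val = 0 from rfl, show ((1 : ZMod 2)).val = 1 from rfl,
      show ((0 : ZMod 2)).val = 0 from rfl]

private lemma zmod_sign_id' (w x y z u : ZMod 2) :
    (w + x) * y + ((x + z) * u + (y + u) * (x + z)) = (w + z) * y := by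
  revert w x y z u; decide

private lemma term_eq' {K A : Type*} [CommSemiring K] [Ring A] [Algebra K A]
    (b s c : K) (x : A) :
    algebraMap K A b * (c • x) * algebraMap K A s = (c * b * s) • x := by
  rw [mul_smul_comm, smul_mul_assoc, mul_assoc, ← Algebra.commutes s x, ← mul_assoc,
    ← map_mul, ← Algebra.smul_def, smul_smul, mul_assoc]

/-- The big matrix `T X` with entries `(-1)^((k i + k a) k j) • (X i a * X j b)`. -/
private def bigT (K : Type*) {A : Type*} [CommRing K] [Ring A] [Module K A]
    {I : Type*} (k : I → ZMod 2) (X : I → I → A) : Matrix (I × I) (I × I) A :=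
  Matrix.of fun p q => ((-1 : K) ^ ((k p.1 + k q.1) * k p.2).val) • (X p.1 q.1 * X p.2 q.2)

private lemma key_entry {K A : Type*} [Field K] [Ring A] [Algebra K A]
    {I : Type*} [Fintype I] (k : I → ZMod 2)
    (B S : Matrix (I × I) (I × I) K) (X : I → I → A) (s t c d : I) :
    ∑ i : I, ∑ j : I, ∑ a : I, ∑ b : I,
        ((-1 : K) ^ ((k i + k a) * k j).val * B (s, t) (i, j) * S (a, b) (c, d))
          • (X i a * X j b)
      = (B.map (algebraMap K A) * bigT K k X * S.map (algebraMap K A)) (s, t) (c, d) := by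
  symm
  conv_lhs =>
    rw [Matrix.mul_apply]
    simp only [Matrix.mul_apply, Finset.sum_mul]
    rw [Finset.sum_comm]
    simp only [Fintype.sum_prod_type]
  refine Finset.sum_congr rfl fun i _ => Finset.sum_congr rfl fun j _ =>
    Finset.sum_congr rfl fun a _ => Finset.sum_congr rfl fun b _ => ?_
  simp only [Matrix.map_apply, bigT, Matrix.of_apply]
  rw [term_eq']

private lemma bigT_mul {K A : Type*} [Field K] [Ring A] [Algebra K A]
    {I : Type*} [Fintype I] (k : I → ZMod 2) (M N : I → I → A)
    (hcomm : ∀ i j p q : I,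
      M i j * N p q
        = ((-1 : K) ^ ((k i + k j) * (k p + k q)).val) • (N p q * M i j)) :
    bigT K k (fun i j => ∑ p : I, M i p * N p j) = bigT K k M * bigT K k N := by
  ext ⟨i, j⟩ ⟨c, d⟩
  conv_rhs => rw [Matrix.mul_apply, Fintype.sum_prod_type]
  simp only [bigT, Matrix.of_apply, Finset.sum_mul, Finset.mul_sum, Finset.smul_sum]
  conv_lhs => rw [Finset.sum_comm]
  refine Finset.sum_congr rfl fun a _ => Finset.sum_congr rfl fun b _ => ?_
  rw [smul_mul_smul_comm]
  have step : M i a * M j b * (N a c * N b d)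
      = ((-1 : K) ^ (((k j + k b) * (k a + k c)).val))
          • (M i a * (N a c * M j b * N b d)) := by
    rw [mul_assoc, ← mul_assoc (M j b), hcomm j b a c, smul_mul_assoc, mul_smul_comm]
  rw [step, smul_smul]
  have hco : (-1 : K) ^ ((k i + k c) * k j).val
      = (-1 : K) ^ ((k i + k a) * k j).val * (-1 : K) ^ ((k a + k c) * k b).val
          * (-1 : K) ^ (((k j + k b) * (k a + k c)).val) := by
    rw [mul_assoc, ← chi_add', ← chi_add', zmod_sign_id']
  rw [hco]
  congr 1
  simp only [mul_assoc]

/-- the product of two super-commuting `B`-Manin matrices over a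
ℤ₂-graded algebra is again a `B`-Manin matrix. Here `I` is a finite index set
with format `k : I → ℤ/2`, `B` is an even idempotent for this format and
`S = 1 - B`. -/
theorem product_of_supercommuting_manin_matrices_is_manin
    {K : Type*} [Field K] (hchar : (2 : K) ≠ 0)
    {I : Type*} [Fintype I] [DecidableEq I]
    (k : I → ZMod 2)
    (B : Matrix (I × I) (I × I) K)
    (hBidem : B * B = B)
    (hBeven : ∀ s t i j, k s + k t ≠ k i + k j → B (s, t) (i, j) = 0)
    {A : Type*} [Ring A] [Algebra K A]
    (𝒜 : ZMod 2 → Submodule K A)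
    (hinternal : DirectSum.IsInternal 𝒜)
    (hone : (1 : A) ∈ 𝒜 0)
    (hmul : ∀ (g h : ZMod 2) (x y : A), x ∈ 𝒜 g → y ∈ 𝒜 h → x * y ∈ 𝒜 (g + h))
    (M N : I → I → A)
    (hMhom : ∀ i j, M i j ∈ 𝒜 (k i + k j))
    (hNhom : ∀ i j, N i j ∈ 𝒜 (k i + k j))
    (hMManin : ∀ s t c d : I,
      ∑ i : I, ∑ j : I, ∑ a : I, ∑ b : I,
        ((-1 : K) ^ ((k i + k a) * k j).val * B (s, t) (i, j)
          * ((1 : Matrix (I × I) (I × I) K) - B) (a, b) (c, d))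
          • (M i a * M j b) = 0)
    (hNManin : ∀ s t c d : I,
      ∑ i : I, ∑ j : I, ∑ a : I, ∑ b : I,
        ((-1 : K) ^ ((k i + k a) * k j).val * B (s, t) (i, j)
          * ((1 : Matrix (I × I) (I × I) K) - B) (a, b) (c, d))
          • (N i a * N j b) = 0)
    (hcomm : ∀ i j p q : I,
      M i j * N p q
        = ((-1 : K) ^ ((k i + k j) * (k p + k q)).val) • (N p q * M i j)) :
    ∀ s t c d : I,
      ∑ i : I, ∑ j : I, ∑ a : I, ∑ b : I,
        ((-1 : K) ^ ((k i + k a) * k j).val * B (s, t) (i, j)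
          * ((1 : Matrix (I × I) (I × I) K) - B) (a, b) (c, d))
          • ((∑ p : I, M i p * N p a) * (∑ q : I, M j q * N q b)) = 0 := by
  intro s t c d
  set S : Matrix (I × I) (I × I) K := (1 : Matrix (I × I) (I × I) K) - B with hSdef
  set φB : Matrix (I × I) (I × I) A := B.map (algebraMap K A) with hφB
  set φS : Matrix (I × I) (I × I) A := S.map (algebraMap K A) with hφS
  have hM0 : φB * bigT K k M * φS = 0 := by
    ext ⟨s', t'⟩ ⟨c', d'⟩
    rw [Matrix.zero_apply, ← key_entry k B S M s' t' c' d']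
    exact hMManin s' t' c' d'
  have hN0 : φB * bigT K k N * φS = 0 := by
    ext ⟨s', t'⟩ ⟨c', d'⟩
    rw [Matrix.zero_apply, ← key_entry k B S N s' t' c' d']
    exact hNManin s' t' c' d'
  have hBS : φB + φS = 1 := by
    ext p q
    simp only [hφB, hφS, hSdef, Matrix.add_apply, Matrix.map_apply, Matrix.sub_apply,
      ← map_add, add_sub_cancel]
    simp [Matrix.one_apply, apply_ite (algebraMap K A)]
  have hBM : φB * bigT K k M * φB = φB * bigT K k M := by
    have h1 : φB * bigT K k M * (φB + φS) = φB * bigT K k M := by rw [hBS, mul_one]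
    rw [mul_add, hM0, add_zero] at h1
    exact h1
  have hfinal : φB * bigT K k (fun i j => ∑ p : I, M i p * N p j) * φS = 0 := by
    rw [bigT_mul k M N hcomm, ← mul_assoc, ← hBM]
    calc φB * bigT K k M * φB * bigT K k N * φS
        = φB * bigT K k M * (φB * bigT K k N * φS) := by
          simp only [mul_assoc]
      _ = 0 := by rw [hN0, mul_zero]
  have hkey := key_entry k B S (fun i j => ∑ p : I, M i p * N p j) s t c d
  rw [hkey, hfinal, Matrix.zero_apply]
end

section
/- Let K be a field and V, W vector spaces over K. The K-algebra homomorphism Φ : TensorAlgebra K (V × W) → (TensorAlgebra K V) ⊗[K] (TensorAlgebra K W) determined by Φ(ι(v,w)) = (ι v) ⊗ 1 + 1 ⊗ (ι w) is surjective, and its kernel equals the two-sided ideal of TensorAlgebra K (V × W) generated by the elements ι(v,0)·ι(0,w) − ι(0,w)·ι(v,0) for v ∈ V, w ∈ W. -/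
open TensorProduct

/-- The algebra homomorphism `T(V × W) → TV ⊗ TW` determined by
`ι (v, w) ↦ ι v ⊗ 1 + 1 ⊗ ι w`. -/
noncomputable def tensorAlgebraProdToTensorProduct (K V W : Type*) [Field K]
    [AddCommGroup V] [Module K V] [AddCommGroup W] [Module K W] :
    TensorAlgebra K (V × W) →ₐ[K] TensorAlgebra K V ⊗[K] TensorAlgebra K W :=
  TensorAlgebra.lift K
    ((Algebra.TensorProduct.includeLeft :
        TensorAlgebra K V →ₐ[K] TensorAlgebra K V ⊗[K] TensorAlgebra K W).toLinearMap
          ∘ₗ TensorAlgebra.ι K ∘ₗ LinearMap.fst K V W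
      + (Algebra.TensorProduct.includeRight :
          TensorAlgebra K W →ₐ[K] TensorAlgebra K V ⊗[K] TensorAlgebra K W).toLinearMap
            ∘ₗ TensorAlgebra.ι K ∘ₗ LinearMap.snd K V W)

section Aux

variable (K V W : Type*) [Field K] [AddCommGroup V] [Module K V] [AddCommGroup W] [Module K W]

/-- `TV → T(V × W)`, `ι v ↦ ι (v, 0)`. -/
noncomputable def tapJ : TensorAlgebra K V →ₐ[K] TensorAlgebra K (V × W) :=
  TensorAlgebra.lift K ((TensorAlgebra.ι K).comp (LinearMap.inl K V W))

/-- `TW → T(V × W)`, `ι w ↦ ι (0, w)`. -/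
noncomputable def tapK : TensorAlgebra K W →ₐ[K] TensorAlgebra K (V × W) :=
  TensorAlgebra.lift K ((TensorAlgebra.ι K).comp (LinearMap.inr K V W))

/-- A linear section of `Φ` (mod the commutator ideal): `a ⊗ b ↦ J a * K b`. -/
noncomputable def tapS :
    TensorAlgebra K V ⊗[K] TensorAlgebra K W →ₗ[K] TensorAlgebra K (V × W) :=
  TensorProduct.lift <|
    (LinearMap.mul K (TensorAlgebra K (V × W))).compl₁₂
      (tapJ K V W).toLinearMap (tapK K V W).toLinearMap

variable {K V W}

@[simp] lemma tapJ_ι (v : V) :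
    tapJ K V W (TensorAlgebra.ι K v) = TensorAlgebra.ι K ((v, 0) : V × W) := by
  simp [tapJ]

@[simp] lemma tapK_ι (w : W) :
    tapK K V W (TensorAlgebra.ι K w) = TensorAlgebra.ι K ((0, w) : V × W) := by
  simp [tapK]

@[simp] lemma tapS_tmul (a : TensorAlgebra K V) (b : TensorAlgebra K W) :
    tapS K V W (a ⊗ₜ b) = tapJ K V W a * tapK K V W b := rfl

@[simp] lemma tap_Phi_ι (v : V) (w : W) :
    tensorAlgebraProdToTensorProduct K V W (TensorAlgebra.ι K ((v, w) : V × W))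
      = TensorAlgebra.ι K v ⊗ₜ 1 + 1 ⊗ₜ TensorAlgebra.ι K w := by
  rw [tensorAlgebraProdToTensorProduct, TensorAlgebra.lift_ι_apply]
  simp

/-- The commutator ideal. -/
noncomputable def tapI : TwoSidedIdeal (TensorAlgebra K (V × W)) :=
  TwoSidedIdeal.span
    {x : TensorAlgebra K (V × W) | ∃ (v : V) (w : W),
      x = TensorAlgebra.ι K ((v, 0) : V × W) * TensorAlgebra.ι K ((0, w) : V × W)
        - TensorAlgebra.ι K ((0, w) : V × W) * TensorAlgebra.ι K ((v, 0) : V × W)}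

lemma tapI_comm (a : TensorAlgebra K V) (b : TensorAlgebra K W) :
    (tapI (K := K) (V := V) (W := W)).ringCon
      (tapJ K V W a * tapK K V W b) (tapK K V W b * tapJ K V W a) := by
  set c := (tapI (K := K) (V := V) (W := W)).ringCon with hc
  induction a using TensorAlgebra.induction with
  | algebraMap r =>
    rw [AlgHom.commutes, Algebra.commutes]; exact c.refl _
  | ι v =>
    induction b using TensorAlgebra.induction with
    | algebraMap r => rw [AlgHom.commutes, Algebra.commutes]; exact c.refl _
    | ι w =>
      rw [hc, TwoSidedIdeal.rel_iff]
      simp only [tapJ_ι, tapK_ι]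
      exact TwoSidedIdeal.subset_span ⟨v, w, rfl⟩
    | add b₁ b₂ h₁ h₂ =>
      simp only [map_add]
      rw [mul_add, add_mul]
      exact c.add h₁ h₂
    | mul b₁ b₂ h₁ h₂ =>
      simp only [map_mul]
      rw [← mul_assoc]
      refine c.trans (c.mul h₁ (c.refl _)) ?_
      rw [mul_assoc, mul_assoc]
      exact c.mul (c.refl _) h₂
  | add a₁ a₂ h₁ h₂ =>
    simp only [map_add]
    rw [mul_add, add_mul]
    exact c.add h₁ h₂
  | mul a₁ a₂ h₁ h₂ =>
    simp only [map_mul]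
    rw [mul_assoc]
    refine c.trans (c.mul (c.refl _) h₂) ?_
    rw [← mul_assoc, ← mul_assoc]
    exact c.mul h₁ (c.refl _)

lemma tapS_mul (x y : TensorAlgebra K V ⊗[K] TensorAlgebra K W) :
    (tapI (K := K) (V := V) (W := W)).ringCon
      (tapS K V W x * tapS K V W y) (tapS K V W (x * y)) := by
  set c := (tapI (K := K) (V := V) (W := W)).ringCon with hc
  induction x using TensorProduct.induction_on with
  | zero => simp only [map_zero, zero_mul]; exact c.refl _
  | add x₁ x₂ h₁ h₂ =>
    simp only [add_mul, map_add]
    exact c.add h₁ h₂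
  | tmul a b =>
    induction y using TensorProduct.induction_on with
    | zero => simp only [map_zero, mul_zero]; exact c.refl _
    | add y₁ y₂ h₁ h₂ =>
      simp only [mul_add, map_add]
      exact c.add h₁ h₂
    | tmul a' b' =>
      rw [Algebra.TensorProduct.tmul_mul_tmul]
      simp only [tapS_tmul, map_mul]
      have e1 : tapJ K V W a * tapK K V W b * (tapJ K V W a' * tapK K V W b')
          = tapJ K V W a * (tapK K V W b * tapJ K V W a' * tapK K V W b') := by
        rw [mul_assoc, ← mul_assoc (tapK K V W b)]
      have e2 : tapJ K V W a * tapJ K V W a' * (tapK K V W b * tapK K V W b')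
          = tapJ K V W a * (tapJ K V W a' * tapK K V W b * tapK K V W b') := by
        rw [mul_assoc, ← mul_assoc (tapJ K V W a')]
      rw [e1, e2]
      exact c.mul (c.refl _) (c.mul (c.symm (tapI_comm a' b)) (c.refl _))

lemma tap_key (x : TensorAlgebra K (V × W)) :
    (tapI (K := K) (V := V) (W := W)).ringCon x
      (tapS K V W (tensorAlgebraProdToTensorProduct K V W x)) := by
  set c := (tapI (K := K) (V := V) (W := W)).ringCon with hc
  induction x using TensorAlgebra.induction with
  | algebraMap r =>
    rw [AlgHom.commutes, Algebra.TensorProduct.algebraMap_apply, tapS_tmul,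
      AlgHom.commutes, map_one, mul_one]
    exact c.refl _
  | ι vw =>
    obtain ⟨v, w⟩ := vw
    rw [tap_Phi_ι, map_add, tapS_tmul, tapS_tmul, map_one, map_one, mul_one, one_mul,
      tapJ_ι, tapK_ι, ← map_add]
    have : ((v, 0) : V × W) + (0, w) = (v, w) := by simp
    rw [this]
    exact c.refl _
  | add x₁ x₂ h₁ h₂ =>
    simp only [map_add]
    exact c.add h₁ h₂
  | mul x₁ x₂ h₁ h₂ =>
    simp only [map_mul]
    exact c.trans (c.mul h₁ h₂) (tapS_mul _ _)

lemma tap_Phi_comp_J :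
    (tensorAlgebraProdToTensorProduct K V W).comp (tapJ K V W)
      = Algebra.TensorProduct.includeLeft := by
  ext v
  simp

lemma tap_Phi_comp_K :
    (tensorAlgebraProdToTensorProduct K V W).comp (tapK K V W)
      = (Algebra.TensorProduct.includeRight :
          TensorAlgebra K W →ₐ[K] TensorAlgebra K V ⊗[K] TensorAlgebra K W) := by
  ext w
  simp

end Aux

/-- `Φ : T(V × W) → TV ⊗ TW`, `ι(v,w) ↦ ι v ⊗ 1 + 1 ⊗ ι w`, is surjective
and its kernel is the two-sided ideal generated by the commutators
`ι(v,0) * ι(0,w) - ι(0,w) * ι(v,0)`. -/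
theorem tensorAlgebraProdToTensorProduct_surjective_ker (K V W : Type*) [Field K]
    [AddCommGroup V] [Module K V] [AddCommGroup W] [Module K W] :
    Function.Surjective (tensorAlgebraProdToTensorProduct K V W)
      ∧ TwoSidedIdeal.ker (tensorAlgebraProdToTensorProduct K V W)
        = TwoSidedIdeal.span
            {x : TensorAlgebra K (V × W) | ∃ (v : V) (w : W),
              x = TensorAlgebra.ι K ((v, 0) : V × W) * TensorAlgebra.ι K ((0, w) : V × W)
                - TensorAlgebra.ι K ((0, w) : V × W) * TensorAlgebra.ι K ((v, 0) : V × W)} := by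
  constructor
  · intro z
    induction z using TensorProduct.induction_on with
    | zero => exact ⟨0, map_zero _⟩
    | tmul a b =>
      refine ⟨tapJ K V W a * tapK K V W b, ?_⟩
      rw [map_mul, ← AlgHom.comp_apply, ← AlgHom.comp_apply, tap_Phi_comp_J, tap_Phi_comp_K]
      simp
    | add x y hx hy =>
      obtain ⟨x', hx'⟩ := hx
      obtain ⟨y', hy'⟩ := hy
      exact ⟨x' + y', by rw [map_add, hx', hy']⟩
  · ext x
    rw [TwoSidedIdeal.mem_ker]
    show _ ↔ x ∈ tapI (K := K) (V := V) (W := W)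
    constructor
    · intro h
      have := tap_key (K := K) (V := V) (W := W) x
      rw [h, map_zero] at this
      rwa [TwoSidedIdeal.mem_iff]
    · intro h
      rw [tapI, TwoSidedIdeal.mem_span_iff] at h
      have := h (TwoSidedIdeal.ker (tensorAlgebraProdToTensorProduct K V W)) ?_
      · rwa [TwoSidedIdeal.mem_ker] at this
      · rintro y ⟨v, w, rfl⟩
        rw [SetLike.mem_coe, TwoSidedIdeal.mem_ker]
        simp [Algebra.TensorProduct.tmul_mul_tmul]
end

section
/- Let K be a field with char K ≠ 2 and V a finite-dimensional ℤ₂-graded vector space over K, with grading subspaces V₀, V₁ (V = V₀ ⊕ V₁ internal direct sum). Equip V* with the dual grading (V*)₀ := V₁^⊥ and (V*)₁ := V₀^⊥ (these form an internal direct sum of V*). Let R_S ⊆ V ⊗ V be the span of the elements v ⊗ w − (−1)^{ij} w ⊗ v for v ∈ V_i, w ∈ V_j (i,j ∈ {0,1}), and let R_Λ ⊆ V* ⊗ V* be the span of λ ⊗ μ + (−1)^{ij} μ ⊗ λ for λ ∈ (V*)_i, μ ∈ (V*)_j. Then the preimage under the canonical isomorphism dualDistrib : V* ⊗ V* ≅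 (V ⊗ V)* of the dual annihilator of R_S equals R_Λ. -/
/-!
Let `p` be the projection of `V` onto `V₁` along `V₀` and `τ` the signed swap of `V ⊗ V` built
from it. Since homogeneous pure tensors span `V ⊗ V`, `R_S = range (1 - τ)`; likewise, as `p*` is
the projection onto `(V*)₁` along `(V*)₀`, `R_Λ = range (1 + τ*)` for the signed swap `τ*` of
`V* ⊗ V*`. Under `dualDistrib`, `τ*` becomes precomposition with `τ`, so `dualDistrib ξ` kills `R_S`
iff `τ* ξ = ξ`; as `τ*` is an involution and `2` is invertible, these fixed points are exactly
`range (1 + τ*)`.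
-/

open TensorProduct

theorem ZMod.eq_zero_or_eq_one (i : ZMod 2) : i = 0 ∨ i = 1 := by
  revert i
  decide

theorem ZMod.univ_two : (Set.univ : Set (ZMod 2)) = {0, 1} := by
  ext i
  simpa using ZMod.eq_zero_or_eq_one i

section Dual

variable {R M : Type*} [CommRing R] [AddCommGroup M] [Module R M]

theorem IsIdempotentElem.dualMap {p : M →ₗ[R] M} (hp : IsIdempotentElem p) :
    IsIdempotentElem p.dualMap := by
  rw [IsIdempotentElem, Module.End.mul_eq_comp, LinearMap.dualMap_comp_dualMap,
    ← Module.End.mul_eq_comp, hp.eq]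

theorem Submodule.dualMap_projection_of_mem_dualAnnihilator_left {P Q : Submodule R M}
    (hPQ : IsCompl P Q) {l : Module.Dual R M} (hl : l ∈ P.dualAnnihilator) :
    (P.projection Q hPQ).dualMap l = 0 := by
  ext v
  exact (Submodule.mem_dualAnnihilator _).mp hl _ (projection_apply_mem hPQ v)

theorem Submodule.dualMap_projection_of_mem_dualAnnihilator_right {P Q : Submodule R M}
    (hPQ : IsCompl P Q) {l : Module.Dual R M} (hl : l ∈ Q.dualAnnihilator) :
    (P.projection Q hPQ).dualMap l = l := by
  ext v
  have h := (Submodule.mem_dualAnnihilator _).mp hl _ (sub_projection_mem hPQ v)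
  rw [map_sub, sub_eq_zero] at h
  exact h.symm

theorem LinearMap.mem_dualAnnihilator_range_id_sub_iff (τ : M →ₗ[R] M) (f : Module.Dual R M) :
    f ∈ (LinearMap.range (LinearMap.id - τ)).dualAnnihilator ↔ f ∘ₗ τ = f := by
  rw [← LinearMap.ker_dualMap_eq_dualAnnihilator_range, LinearMap.mem_ker,
    LinearMap.dualMap_apply', LinearMap.comp_sub, LinearMap.comp_id, sub_eq_zero, eq_comm]

theorem LinearMap.mem_range_id_add_iff [Invertible (2 : R)] {τ : M →ₗ[R] M}
    (hτ : ∀ x, τ (τ x) = x) {x : M} : x ∈ LinearMap.range (LinearMap.id + τ) ↔ τ x = x := by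
  constructor
  · rintro ⟨y, rfl⟩
    simp [hτ, add_comm]
  · intro hx
    refine ⟨⅟(2 : R) • x, ?_⟩
    rw [LinearMap.add_apply, LinearMap.id_apply, map_smul, hx, ← smul_add, ← two_smul R x,
      smul_smul, invOf_mul_self, one_smul]

end Dual

theorem DirectSum.IsInternal.dualAnnihilator_add_one {K V : Type*} [Field K] [AddCommGroup V]
    [Module K V] {G : ZMod 2 → Submodule K V} (hG : DirectSum.IsInternal G) :
    DirectSum.IsInternal fun i => (G (i + 1)).dualAnnihilator := by
  rw [DirectSum.isInternal_submodule_iff_isCompl _ zero_ne_one ZMod.univ_two]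
  exact Subspace.isCompl_dualAnnihilator (hG.isCompl zero_ne_one ZMod.univ_two).symm

section GradedTensors

variable {R M X ι : Type*} [CommRing R] [AddCommGroup M] [Module R M] [AddCommGroup X]
  [Module R X] {G : ι → Submodule R M}

theorem span_tmul_mem_eq_top (hG : ⨆ i, G i = ⊤) :
    Submodule.span R {x : M ⊗[R] M | ∃ (i j : ι) (v w : M), v ∈ G i ∧ w ∈ G j ∧ x = v ⊗ₜ w}
      = ⊤ := by
  rw [eq_top_iff, ← span_tmul_eq_top, Submodule.span_le]
  rintro _ ⟨v, w, rfl⟩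
  have hv : v ∈ ⨆ i, G i := hG ▸ Submodule.mem_top
  have hw : w ∈ ⨆ i, G i := hG ▸ Submodule.mem_top
  refine Submodule.iSup_induction G (motive := fun v => v ⊗ₜ w ∈ _) hv (fun i v hv => ?_)
    (by simp) (fun v v' h h' => by rw [add_tmul]; exact add_mem h h')
  refine Submodule.iSup_induction G (motive := fun w => v ⊗ₜ w ∈ _) hw (fun j w hw => ?_)
    (by simp) (fun w w' h h' => by rw [tmul_add]; exact add_mem h h')
  exact Submodule.subset_span ⟨i, j, v, w, hv, hw, rfl⟩

theorem span_graded_eq_range (hG : ⨆ i, G i = ⊤) (f : M ⊗[R] M →ₗ[R] X)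
    (r : ι → ι → M → M → X) (hr : ∀ i j v w, v ∈ G i → w ∈ G j → f (v ⊗ₜ w) = r i j v w) :
    Submodule.span R {x | ∃ (i j : ι) (v w : M), v ∈ G i ∧ w ∈ G j ∧ x = r i j v w}
      = LinearMap.range f := by
  have himage : {x | ∃ (i j : ι) (v w : M), v ∈ G i ∧ w ∈ G j ∧ x = r i j v w} =
      f '' {x | ∃ (i j : ι) (v w : M), v ∈ G i ∧ w ∈ G j ∧ x = v ⊗ₜ w} := by
    ext x
    constructor
    · rintro ⟨i, j, v, w, hv, hw, rfl⟩
      exact ⟨_, ⟨i, j, v, w, hv, hw, rfl⟩, hr i j v w hv hw⟩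
    · rintro ⟨_, ⟨i, j, v, w, hv, hw, rfl⟩, rfl⟩
      exact ⟨i, j, v, w, hv, hw, hr i j v w hv hw⟩
  rw [himage, Submodule.span_image, span_tmul_mem_eq_top hG, Submodule.map_top]

end GradedTensors

section SuperSwap

variable {R M : Type*} [CommRing R] [AddCommGroup M] [Module R M] (p : M →ₗ[R] M)

/-- For `p` the projection onto the odd part of a `ℤ/2`-graded module, this is the signed swap
`v ⊗ w ↦ (-1)^(|v| |w|) w ⊗ v`. -/
noncomputable def superSwap : M ⊗[R] M →ₗ[R] M ⊗[R] M :=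
  (TensorProduct.comm R M M).toLinearMap ∘ₗ (LinearMap.id - (2 : R) • map p p)

theorem superSwap_tmul (v w : M) :
    superSwap p (v ⊗ₜ w) = w ⊗ₜ v - (2 : R) • (p w ⊗ₜ p v) := by
  simp [superSwap]

variable {p}

theorem superSwap_superSwap (hp : IsIdempotentElem p) (x : M ⊗[R] M) :
    superSwap p (superSwap p x) = x := by
  have hpp : ∀ v, p (p v) = p v := fun v => LinearMap.congr_fun hp.eq v
  induction x using TensorProduct.induction_on with
  | zero => simp
  | tmul v w =>
    simp only [superSwap_tmul, map_sub, map_smul, hpp]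
    module
  | add x y hx hy => rw [map_add, map_add, hx, hy]

theorem dualDistrib_superSwap_dualMap (η : Module.Dual R M ⊗[R] Module.Dual R M) :
    dualDistrib R M M (superSwap p.dualMap η) = dualDistrib R M M η ∘ₗ superSwap p := by
  induction η using TensorProduct.induction_on with
  | zero => ext; simp
  | tmul l m =>
    ext v w
    simp only [superSwap_tmul, map_sub, map_smul, AlgebraTensorModule.curry_apply,
      LinearMap.restrictScalars_self, curry_apply, LinearMap.sub_apply, dualDistrib_apply,
      LinearMap.smul_apply, LinearMap.dualMap_apply, smul_eq_mul, LinearMap.coe_comp,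
      Function.comp_apply]
    ring
  | add η η' h h' => rw [map_add, map_add, h, h', map_add, LinearMap.add_comp]

theorem superSwap_tmul_of_mem (G : ZMod 2 → Submodule R M) (hp0 : ∀ v ∈ G 0, p v = 0)
    (hp1 : ∀ v ∈ G 1, p v = v) {i j : ZMod 2} {v w : M} (hv : v ∈ G i) (hw : w ∈ G j) :
    superSwap p (v ⊗ₜ w) = (-1 : R) ^ (i * j).val • (w ⊗ₜ v) := by
  rw [superSwap_tmul]
  obtain rfl | rfl : i = 0 ∨ i = 1 := ZMod.eq_zero_or_eq_one i
  · simp [hp0 v hv]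
  obtain rfl | rfl : j = 0 ∨ j = 1 := ZMod.eq_zero_or_eq_one j
  · simp [hp0 w hw]
  · simp [hp1 v hv, hp1 w hw, ZMod.val_one]
    module

end SuperSwap

section KoszulDual

variable {R M : Type*} [CommRing R] [AddCommGroup M] [Module R M] {p : M →ₗ[R] M}

theorem comap_dualDistrib_dualAnnihilator_range_id_sub_superSwap [Module.Free R M]
    [Module.Finite R M] [Invertible (2 : R)] (hp : IsIdempotentElem p) :
    (LinearMap.range (LinearMap.id - superSwap p)).dualAnnihilator.comap (dualDistrib R M M)
      = LinearMap.range (LinearMap.id + superSwap p.dualMap) := by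
  have hinj : Function.Injective (dualDistrib R M M) := (dualDistribEquiv R M M).injective
  ext ξ
  rw [Submodule.mem_comap, LinearMap.mem_dualAnnihilator_range_id_sub_iff,
    ← dualDistrib_superSwap_dualMap, hinj.eq_iff,
    LinearMap.mem_range_id_add_iff (superSwap_superSwap hp.dualMap)]

end KoszulDual

/-- the Koszul dual of the super-symmetric relations is the
super-exterior relations: the preimage under `dualDistrib` of the dual annihilator of
`R_S = span{v ⊗ w - (-1)^{ij} w ⊗ v}` equals `R_Λ = span{λ ⊗ μ + (-1)^{ij} μ ⊗ λ}`,
where `V*` carries the dual grading `(V*)₀ = V₁^⊥`, `(V*)₁ = V₀^⊥`. -/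
theorem symmetric_relations_koszul_dual_exterior {K V : Type*} [Field K]
    (hchar : (2 : K) ≠ 0)
    [AddCommGroup V] [Module K V] [FiniteDimensional K V]
    (Vg : ZMod 2 → Submodule K V) (hV : DirectSum.IsInternal Vg) :
    Submodule.comap (TensorProduct.dualDistrib K V V)
        (Submodule.dualAnnihilator
          (Submodule.span K
            {x : V ⊗[K] V | ∃ (i j : ZMod 2) (v w : V), v ∈ Vg i ∧ w ∈ Vg j ∧
              x = v ⊗ₜ[K] w - ((-1 : K) ^ (i * j).val) • (w ⊗ₜ[K] v)}))
      = Submodule.span K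
          {y : Module.Dual K V ⊗[K] Module.Dual K V |
            ∃ (i j : ZMod 2) (l m : Module.Dual K V),
              l ∈ (Vg (i + 1)).dualAnnihilator ∧ m ∈ (Vg (j + 1)).dualAnnihilator ∧
              y = l ⊗ₜ[K] m + ((-1 : K) ^ (i * j).val) • (m ⊗ₜ[K] l)} := by
  have hcompl : IsCompl (Vg 1) (Vg 0) := (hV.isCompl zero_ne_one ZMod.univ_two).symm
  set p := (Vg 1).projection (Vg 0) hcompl
  have hRS := span_graded_eq_range hV.submodule_iSup_eq_top (LinearMap.id - superSwap p)
    (fun i j v w => v ⊗ₜ[K] w - ((-1 : K) ^ (i * j).val) • (w ⊗ₜ[K] v))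
    fun i j v w hv hw => by
      rw [LinearMap.sub_apply, LinearMap.id_apply, superSwap_tmul_of_mem Vg
        (fun v hv => Submodule.projection_apply_of_mem_right hcompl hv)
        (fun v hv => Submodule.projection_apply_of_mem_left hcompl hv) hv hw]
  have hRΛ := span_graded_eq_range hV.dualAnnihilator_add_one.submodule_iSup_eq_top
    (LinearMap.id + superSwap p.dualMap)
    (fun i j l m => l ⊗ₜ[K] m + ((-1 : K) ^ (i * j).val) • (m ⊗ₜ[K] l))
    fun i j l m hl hm => by
      rw [LinearMap.add_apply, LinearMap.id_apply,
        superSwap_tmul_of_mem (fun i => (Vg (i + 1)).dualAnnihilator)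
        (fun l hl => Submodule.dualMap_projection_of_mem_dualAnnihilator_left hcompl hl)
        (fun l hl => Submodule.dualMap_projection_of_mem_dualAnnihilator_right hcompl hl) hl hm]
  have : Invertible (2 : K) := invertibleOfNonzero hchar
  rw [hRS, hRΛ]
  exact comap_dualDistrib_dualAnnihilator_range_id_sub_superSwap
    (Submodule.isIdempotentElem_projection hcompl)
end

section
/- Let K be a field and V, W finite-dimensional vector spaces over K, with subspaces V₀ ≤ V and W₀ ≤ W. Then, under the canonical isomorphism dualDistrib : V* ⊗ W* ≅ (V ⊗ W)*, the image of the subspace V₀^⊥ ⊗ W₀^⊥ (i.e. the image of the map V₀^⊥ ⊗ W₀^⊥ → V* ⊗ W* induced by the inclusions, composed with dualDistrib) equals the dual annihilator (V₀ ⊗ W + V ⊗ W₀)^⊥ ⊆ (V ⊗ W)*, where V₀ ⊗ W and V ⊗ W₀ denote the images of the canonical maps into V ⊗ W. -/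
/-!
Each `λ ⊗ μ` with `λ ∈ V₀^⊥`, `μ ∈ W₀^⊥` kills the pure tensors of `V₀ ⊗ W` and of `V ⊗ W₀`,
so the image lies in the annihilator. Equality is a dimension count: the map
`V₀^⊥ ⊗ W₀^⊥ → (V ⊗ W)*` is injective, and the annihilator has the dimension of
`(V ⊗ W) ⧸ (V₀ ⊗ W + V ⊗ W₀) ≃ (V ⧸ V₀) ⊗ (W ⧸ W₀)`, i.e. `dim V₀^⊥ · dim W₀^⊥`.
-/

open TensorProduct Module

section CommSemiring

variable {R M N : Type*} [CommSemiring R] [AddCommMonoid M] [Module R M]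
  [AddCommMonoid N] [Module R N]

theorem dualDistrib_tmul_mem_dualAnnihilator_range_map_subtype_id {U : Submodule R M}
    {f : Dual R M} (hf : f ∈ U.dualAnnihilator) (g : Dual R N) :
    dualDistrib R M N (f ⊗ₜ g) ∈
      (LinearMap.range (map U.subtype (LinearMap.id : N →ₗ[R] N))).dualAnnihilator := by
  rw [Submodule.mem_dualAnnihilator]
  rintro _ ⟨t, rfl⟩
  induction t with
  | zero => simp
  | add a b ha hb => simp only [map_add, ha, hb, add_zero]
  | tmul u n => simp [dualDistrib_apply, (Submodule.mem_dualAnnihilator _).mp hf u u.2]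

theorem dualDistrib_tmul_mem_dualAnnihilator_range_map_id_subtype {U : Submodule R N}
    (f : Dual R M) {g : Dual R N} (hg : g ∈ U.dualAnnihilator) :
    dualDistrib R M N (f ⊗ₜ g) ∈
      (LinearMap.range (map (LinearMap.id : M →ₗ[R] M) U.subtype)).dualAnnihilator := by
  rw [Submodule.mem_dualAnnihilator]
  rintro _ ⟨t, rfl⟩
  induction t with
  | zero => simp
  | add a b ha hb => simp only [map_add, ha, hb, add_zero]
  | tmul m u => simp [dualDistrib_apply, (Submodule.mem_dualAnnihilator _).mp hg u u.2]

theorem range_dualDistrib_comp_map_le_dualAnnihilator (M₀ : Submodule R M) (N₀ : Submodule R N) :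
    LinearMap.range (dualDistrib R M N ∘ₗ
        map M₀.dualAnnihilator.subtype N₀.dualAnnihilator.subtype)
      ≤ (LinearMap.range (map M₀.subtype (LinearMap.id : N →ₗ[R] N))
          ⊔ LinearMap.range (map (LinearMap.id : M →ₗ[R] M) N₀.subtype)).dualAnnihilator := by
  rw [LinearMap.range_le_iff_comap, eq_top_iff]
  rintro t -
  induction t with
  | zero => simp
  | add a b ha hb => exact Submodule.add_mem _ ha hb
  | tmul f g =>
    rw [Submodule.mem_comap, LinearMap.comp_apply, map_tmul, Submodule.dualAnnihilator_sup_eq]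
    exact ⟨dualDistrib_tmul_mem_dualAnnihilator_range_map_subtype_id f.2 g.1,
      dualDistrib_tmul_mem_dualAnnihilator_range_map_id_subtype f.1 g.2⟩

end CommSemiring

section Field

variable {K V W : Type*} [Field K] [AddCommGroup V] [Module K V] [FiniteDimensional K V]
  [AddCommGroup W] [Module K W] [FiniteDimensional K W]

theorem dualDistrib_comp_map_subtype_injective (V₁ : Submodule K (Dual K V))
    (W₁ : Submodule K (Dual K W)) :
    Function.Injective (dualDistrib K V W ∘ₗ map V₁.subtype W₁.subtype) :=
  -- instance search does not find freeness of submodules of `Dual K W` on its own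
  have := Module.Free.of_divisionRing K W₁
  (dualDistribEquiv K V W).injective.comp
    (map_injective_of_flat_flat _ _ V₁.injective_subtype W₁.injective_subtype)

theorem finrank_dualAnnihilator_sup_range_map (V₀ : Submodule K V) (W₀ : Submodule K W) :
    finrank K (LinearMap.range (map V₀.subtype (LinearMap.id : W →ₗ[K] W))
          ⊔ LinearMap.range (map (LinearMap.id : V →ₗ[K] V) W₀.subtype)).dualAnnihilator
      = finrank K V₀.dualAnnihilator * finrank K W₀.dualAnnihilator := by
  rw [← (Subspace.quotEquivAnnihilator _).finrank_eq,
    ← (quotientTensorQuotientEquiv V₀ W₀).finrank_eq, finrank_tensorProduct,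
    (Subspace.quotEquivAnnihilator V₀).finrank_eq, (Subspace.quotEquivAnnihilator W₀).finrank_eq]

end Field

/-- for finite-dimensional `V`, `W` with subspaces `V₀`, `W₀`, under
`dualDistrib` the image of `V₀^⊥ ⊗ W₀^⊥` equals `(V₀ ⊗ W + V ⊗ W₀)^⊥`. -/
theorem annihilator_tensor_annihilator {K V W : Type*} [Field K]
    [AddCommGroup V] [Module K V] [FiniteDimensional K V]
    [AddCommGroup W] [Module K W] [FiniteDimensional K W]
    (V₀ : Submodule K V) (W₀ : Submodule K W) :
    LinearMap.range (TensorProduct.dualDistrib K V W ∘ₗ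
        TensorProduct.map V₀.dualAnnihilator.subtype W₀.dualAnnihilator.subtype)
      = Submodule.dualAnnihilator
          (LinearMap.range (TensorProduct.map V₀.subtype (LinearMap.id : W →ₗ[K] W))
            ⊔ LinearMap.range
                (TensorProduct.map (LinearMap.id : V →ₗ[K] V) W₀.subtype)) := by
  have := Module.Free.of_divisionRing K V₀.dualAnnihilator
  have := Module.Free.of_divisionRing K W₀.dualAnnihilator
  refine Submodule.eq_of_le_of_finrank_eq (range_dualDistrib_comp_map_le_dualAnnihilator V₀ W₀) ?_
  rw [LinearMap.finrank_range_of_inj (dualDistrib_comp_map_subtype_injective _ _),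
    finrank_tensorProduct, finrank_dualAnnihilator_sup_range_map]
end

section
/- Let K be a field, V a finite-dimensional vector space over K, W an arbitrary vector space over K, and V₀ ≤ V, W₀ ≤ W subspaces. Identify elements of V* ⊗ W with linear operators V → W via the canonical map dualTensorHom (λ ⊗ w ↦ (v ↦ λ(v)·w)), which is an isomorphism since V is finite-dimensional. Then for ξ ∈ V* ⊗ W, the operator dualTensorHom ξ maps V₀ into W₀ if and only if ξ lies in the subspace V₀^⊥ ⊗ W + V* ⊗ W₀ of V* ⊗ W (the sum of the images of the canonical maps V₀^⊥ ⊗ W → V* ⊗ W and V* ⊗ W₀ → V* ⊗ W). -/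
open TensorProduct LinearMap

/-!
Restricting functionals to `V₀` and reducing `W` modulo `W₀` gives a map
`V* ⊗ W → V₀* ⊗ (W ⧸ W₀)`, which under `dualTensorHom` becomes `f ↦ (V₀ → V → W → W ⧸ W₀)`.
As `V₀` is finite-dimensional, `dualTensorHom` on `V₀* ⊗ (W ⧸ W₀)` is injective, so `ξ` maps
`V₀` into `W₀` exactly when it lies in the kernel of that map. Right exactness of `⊗` computes
the kernel as `V* ⊗ W₀ + V₀^⊥ ⊗ W`, because `V₀^⊥` is the kernel of the surjective restriction
`V* → V₀*`.
-/

theorem dualTensorHom_map_dualMap {R M M' N N' : Type*} [CommSemiring R]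
    [AddCommMonoid M] [Module R M] [AddCommMonoid M'] [Module R M']
    [AddCommMonoid N] [Module R N] [AddCommMonoid N'] [Module R N']
    (f : M' →ₗ[R] M) (g : N →ₗ[R] N') (ξ : Module.Dual R M ⊗[R] N) :
    dualTensorHom R M' N' (TensorProduct.map f.dualMap g ξ) = g ∘ₗ dualTensorHom R M N ξ ∘ₗ f := by
  induction ξ using TensorProduct.induction_on with
  | zero => simp
  | tmul φ n => ext; simp
  | add ξ η hξ hη => simp [hξ, hη, comp_add, add_comp]

section

variable {K V W : Type*} [Field K] [AddCommGroup V] [Module K V] [AddCommGroup W] [Module K W]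
  (V₀ : Submodule K V) (W₀ : Submodule K W)

theorem ker_map_dualRestrict_mkQ :
    ker (TensorProduct.map V₀.dualRestrict W₀.mkQ) =
      range (lTensor (Module.Dual K V) W₀.subtype) ⊔ range (rTensor W V₀.dualAnnihilator.subtype) := by
  have hV₀ : Function.Exact V₀.dualAnnihilator.subtype V₀.dualRestrict :=
    exact_iff.mpr (Submodule.range_subtype _).symm
  exact TensorProduct.map_ker (M := V₀.dualAnnihilator) (N := Module.Dual K V)
    (P := Module.Dual K V₀) hV₀ Subspace.dualRestrict_surjective (exact_subtype_mkQ W₀)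
    W₀.mkQ_surjective

theorem map_dualRestrict_mkQ_eq_zero_iff [Module.Finite K V₀] (ξ : Module.Dual K V ⊗[K] W) :
    TensorProduct.map V₀.dualRestrict W₀.mkQ ξ = 0 ↔ ∀ v ∈ V₀, dualTensorHom K V W ξ v ∈ W₀ := by
  rw [← (dualTensorHom_bijective (M := V₀)).injective.eq_iff, map_zero,
    Submodule.dualRestrict_def, dualTensorHom_map_dualMap]
  simp [LinearMap.ext_iff, Submodule.Quotient.mk_eq_zero]

end

/-- for `V` finite-dimensional, an element `ξ ∈ V* ⊗ W`, viewed as an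
operator `V → W` via `dualTensorHom`, maps `V₀` into `W₀` if and only if
`ξ ∈ V₀^⊥ ⊗ W + V* ⊗ W₀`. -/
theorem dualTensorHom_maps_into_iff {K V W : Type*} [Field K]
    [AddCommGroup V] [Module K V] [FiniteDimensional K V]
    [AddCommGroup W] [Module K W]
    (V₀ : Submodule K V) (W₀ : Submodule K W) :
    ∀ ξ : Module.Dual K V ⊗[K] W,
      (∀ v ∈ V₀, dualTensorHom K V W ξ v ∈ W₀)
        ↔ ξ ∈
          LinearMap.range
              (TensorProduct.map V₀.dualAnnihilator.subtype (LinearMap.id : W →ₗ[K] W))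
            ⊔ LinearMap.range
                (TensorProduct.map
                  (LinearMap.id : Module.Dual K V →ₗ[K] Module.Dual K V)
                  W₀.subtype) := by
  intro ξ
  rw [← map_dualRestrict_mkQ_eq_zero_iff, ← mem_ker, ker_map_dualRestrict_mkQ, sup_comm]
  rfl
end
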